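/- Let 𝒳, 𝒴 be finite alphabets with |𝒳| ≥ 2, W a discrete memoryless channel from 𝒳 to 𝒴, α ∈ (0, 1/2], and ε ∈ (0, 2]. Let n be a positive multiple of |𝒳| with n ≥ |𝒳|, n ≥ 2|𝒴|, and n ≥ max{ L·(N_α/ε²)·log²(V_α·N_α/ε²), 2·N_α/ε }, where L := 375/4 and V_α := (25/4)·θ_α. Then, in the sampling model, Pr[ |Ĉⁿ(W) − C(W)| ≤ ε ] ≥ 1 − α. -/

import Mathlib

open MeasureTheory ProbabilityTheory

/-- A probability distribution on a finite alphabet. -/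
def IsDist {𝒴 : Type*} [Fintype 𝒴] (P : 𝒴 → ℝ) : Prop :=
  (∀ y, 0 ≤ P y) ∧ ∑ y, P y = 1

/-- The Kullback–Leibler divergence, valued in `EReal`: it equals the real sum
`∑ y, P y * log (P y / Q y)` (with the convention `0 · log (0/q) = 0`) when
`P ≪ Q`, and `+∞` if `P y > 0 = Q y` for some `y`. -/
noncomputable def klE {𝒴 : Type*} [Fintype 𝒴] (P Q : 𝒴 → ℝ) : EReal :=
  if ∀ y, Q y = 0 → P y = 0 then ((∑ y, P y * Real.log (P y / Q y) : ℝ) : EReal) else ⊤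

/-- The capacity of a DMC in the Csiszár–Kemperman dual (minimax) form. -/
noncomputable def capE {𝒳 𝒴 : Type*} [Fintype 𝒳] [Fintype 𝒴] (W : 𝒳 → 𝒴 → ℝ) : EReal :=
  ⨅ (Q : 𝒴 → ℝ) (_ : IsDist Q), ⨆ x : 𝒳, klE (W x) Q

/-- Real-valued capacity (the capacity of a DMC is always finite). -/
noncomputable def capR {𝒳 𝒴 : Type*} [Fintype 𝒳] [Fintype 𝒴] (W : 𝒳 → 𝒴 → ℝ) : ℝ :=
  (capE W).toReal

/-- Empirical channel from `m` output samples per input symbol. -/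
noncomputable def empCh {𝒳 𝒴 : Type*} [Fintype 𝒴] [DecidableEq 𝒴] {m : ℕ}
    (Ys : 𝒳 → Fin m → 𝒴) : 𝒳 → 𝒴 → ℝ :=
  fun x y => ((Finset.univ.filter fun i => Ys x i = y).card : ℝ) / m

/-- `N_α := 4|𝒳||𝒴| log(|𝒳|/α)`. -/
noncomputable def Nal (cX cY : ℕ) (α : ℝ) : ℝ := 4 * cX * cY * Real.log (cX / α)

/-- `θ_α := (|𝒴|·e² / (|𝒳|·log(|𝒳|/α)))^{1/5}`. -/
noncomputable def thetaAl (cX cY : ℕ) (α : ℝ) : ℝ :=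
  ((cY : ℝ) * Real.exp 2 / (cX * Real.log (cX / α))) ^ ((1 : ℝ) / 5)

/-!
For each input `x` and each set `B ⊆ 𝒴`, the empirical mass `Ŵ(B|x)` is the mean of `m = n/|𝒳|`
independent Bernoulli(`W(B|x)`) variables, so by Hoeffding's inequality it exceeds `W(B|x) + u`
with probability at most `exp (-2 m u²)`. A union bound over the `|𝒳| 2^|𝒴|` pairs `(x, B)` shows
that with probability at least `1 - α` no such excess occurs, and then every row of `Ŵ` is within
`2u` of the corresponding row of `W` in `ℓ¹`.

Capacity is uniformly continuous in this distance: if the rows are `τ`-close, take an almost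
optimal output distribution `Q` for one channel, mix it with weight `γ` with the uniform
distribution (so that `log Q` stays bounded), and use it in the minimax formula for the other
channel. Continuity of entropy and the bound on `log Q` change the divergences by at most
`2γ + τ (1 + 2 log |𝒴| - log γ - log τ)`. With `γ = ε/8`, `τ = ε/(4 log (V_α N_α/ε²))` this is at
most `ε`, and the sample size is large enough to make the union bound at most `α`.
-/

open Real Finset

lemma sub_le_mul_log_div {p q : ℝ} (hp : 0 ≤ p) (hq : 0 ≤ q) (hpq : q = 0 → p = 0) :
    p - q ≤ p * log (p / q) := by
  rcases hp.eq_or_lt with rfl | hp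
  · simpa using hq
  have hq : 0 < q := hq.lt_of_ne fun h => hp.ne' (hpq h.symm)
  have h := mul_le_mul_of_nonneg_left (one_sub_inv_le_log_of_pos (div_pos hp hq)) hp.le
  rwa [inv_div, mul_sub, mul_one, mul_div_cancel₀ _ hp.ne'] at h

lemma mul_log_div_eq_sub {p q : ℝ} (hpq : q = 0 → p = 0) :
    p * log (p / q) = p * log p - p * log q := by
  rcases eq_or_ne p 0 with rfl | hp
  · simp
  rw [log_div hp fun hq => hp (hpq hq), mul_sub]

lemma mul_log_add_mul_log_le {x y : ℝ} (hx : 0 ≤ x) (hy : 0 ≤ y) :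
    x * log x + y * log y ≤ (x + y) * log (x + y) := by
  have key : ∀ {a b : ℝ}, 0 ≤ a → 0 ≤ b → a * log a ≤ a * log (a + b) := fun {a b} ha hb => by
    rcases ha.eq_or_lt with rfl | ha
    · simp
    exact mul_le_mul_of_nonneg_left (log_le_log ha (by linarith)) ha.le
  have := key hy hx
  rw [add_comm y] at this
  linarith [key hx hy]

lemma mul_log_sub_mul_log_le_sub {v w : ℝ} (hw : 0 ≤ w) (hwv : w ≤ v) (hv : v ≤ 1) :
    v * log v - w * log w ≤ v - w := by
  have hlogv : log v ≤ 0 := log_nonpos (hw.trans hwv) hv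
  rcases hw.eq_or_lt with rfl | hw
  · simpa using (mul_nonpos_of_nonneg_of_nonpos hwv hlogv).trans hwv
  have h := sub_le_mul_log_div hw.le (hw.trans_le hwv).le fun h => by linarith
  rw [mul_log_div_eq_sub fun h => by linarith] at h
  nlinarith

lemma abs_negMulLog_sub_negMulLog_le {v w : ℝ} (hv0 : 0 ≤ v) (hv1 : v ≤ 1) (hw0 : 0 ≤ w)
    (hw1 : w ≤ 1) : |negMulLog v - negMulLog w| ≤ |v - w| + negMulLog |v - w| := by
  wlog hwv : w ≤ v generalizing v w
  · rw [abs_sub_comm, abs_sub_comm v]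
    exact this hw0 hw1 hv0 hv1 (le_of_not_ge hwv)
  have hd : 0 ≤ v - w := sub_nonneg.2 hwv
  have hsup := mul_log_add_mul_log_le hw0 hd
  have hup := mul_log_sub_mul_log_le_sub hw0 hwv hv1
  have hdlog : 0 ≤ negMulLog (v - w) := negMulLog_nonneg hd (by linarith)
  rw [add_sub_cancel] at hsup
  rw [abs_of_nonneg hd, abs_le]
  simp only [negMulLog_eq_neg] at hdlog ⊢
  constructor <;> linarith

lemma negMulLog_le_negMulLog {s t : ℝ} (hs : 0 ≤ s) (hst : s ≤ t) (ht : t ≤ exp (-1)) :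
    negMulLog s ≤ negMulLog t := by
  simp only [negMulLog_eq_neg, neg_le_neg_iff]
  exact mul_log_strictAntiOn.antitoneOn ⟨hs, hst.trans ht⟩ ⟨hs.trans hst, ht⟩ hst

lemma neg_log_one_sub_le_two_mul {γ : ℝ} (hγ0 : 0 ≤ γ) (hγ : γ ≤ 1 / 2) :
    -log (1 - γ) ≤ 2 * γ := by
  have h1γ : 0 < 1 - γ := by linarith
  have h := one_sub_inv_le_log_of_pos h1γ
  have : (1 - γ)⁻¹ ≤ 1 + 2 * γ := by
    rw [inv_le_iff_one_le_mul₀ h1γ]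
    nlinarith
  linarith

section Distributions

variable {𝒴 : Type*} [Fintype 𝒴]

lemma IsDist.le_one {P : 𝒴 → ℝ} (hP : IsDist P) (y : 𝒴) : P y ≤ 1 :=
  hP.2 ▸ single_le_sum (fun z _ => hP.1 z) (mem_univ y)

lemma IsDist.sum_mul_log_div_nonneg {P Q : 𝒴 → ℝ} (hP : IsDist P) (hQ : IsDist Q)
    (hPQ : ∀ y, Q y = 0 → P y = 0) : 0 ≤ ∑ y, P y * log (P y / Q y) := by
  calc (0 : ℝ) = ∑ y, (P y - Q y) := by rw [sum_sub_distrib, hP.2, hQ.2, sub_self]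
    _ ≤ _ := sum_le_sum fun y _ => sub_le_mul_log_div (hP.1 y) (hQ.1 y) (hPQ y)

lemma isDist_uniform [Nonempty 𝒴] : IsDist fun _ : 𝒴 => (Fintype.card 𝒴 : ℝ)⁻¹ := by
  refine ⟨fun _ => by positivity, ?_⟩
  simp

lemma sum_abs_sub_le_of_forall_sum_le {f g : 𝒴 → ℝ} (hfg : ∑ y, f y = ∑ y, g y) {u : ℝ}
    (h : ∀ A : Finset 𝒴, ∑ y ∈ A, f y ≤ ∑ y ∈ A, g y + u) :
    ∑ y, |f y - g y| ≤ 2 * u := by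
  have habs : ∀ y, |f y - g y| = 2 * (if g y < f y then f y - g y else 0) - (f y - g y) := by
    intro y
    split_ifs with hy
    · rw [abs_of_pos (sub_pos.2 hy)]; ring
    · rw [abs_of_nonpos (sub_nonpos.2 (not_lt.1 hy))]; ring
  have hA := h (univ.filter fun y => g y < f y)
  rw [sum_congr rfl fun y _ => habs y, sum_sub_distrib, ← mul_sum, ← sum_filter, sum_sub_distrib,
    sum_sub_distrib, hfg, sub_self]
  linarith

lemma sum_negMulLog_le [Nonempty 𝒴] {d : 𝒴 → ℝ} (hd : ∀ y, 0 ≤ d y) :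
    ∑ y, negMulLog (d y) ≤ negMulLog (∑ y, d y) + (∑ y, d y) * log (Fintype.card 𝒴) := by
  have hK : (0 : ℝ) < Fintype.card 𝒴 := Nat.cast_pos.2 Fintype.card_pos
  have h := concaveOn_negMulLog.le_map_sum (t := univ) (w := fun _ => (Fintype.card 𝒴 : ℝ)⁻¹)
    (p := d) (fun _ _ => by positivity) (by simp [hK.ne']) fun y _ => Set.mem_Ici.2 (hd y)
  simp only [smul_eq_mul, ← mul_sum] at h
  rw [negMulLog_mul, negMulLog, log_inv] at h
  have := mul_le_mul_of_nonneg_left h hK.le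
  field_simp at this
  linarith

lemma sum_add_negMulLog_le [Nonempty 𝒴] {d : 𝒴 → ℝ} (hd : ∀ y, 0 ≤ d y) {τ : ℝ} (hdτ : ∑ y, d y ≤ τ)
    (hτ : τ ≤ exp (-1)) :
    ∑ y, (d y + negMulLog (d y)) ≤ τ + negMulLog τ + τ * log (Fintype.card 𝒴) := by
  have hs : 0 ≤ ∑ y, d y := sum_nonneg fun y _ => hd y
  have hlogK : 0 ≤ log (Fintype.card 𝒴) := log_nonneg (Nat.one_le_cast.2 Fintype.card_pos)
  rw [sum_add_distrib]
  linarith [sum_negMulLog_le hd, negMulLog_le_negMulLog hs hdτ hτ,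
    mul_le_mul_of_nonneg_right hdτ hlogK]

lemma abs_sum_negMulLog_sub_sum_negMulLog_le [Nonempty 𝒴] {v w : 𝒴 → ℝ} (hv : IsDist v)
    (hw : IsDist w) {τ : ℝ} (hvw : ∑ y, |v y - w y| ≤ τ) (hτ : τ ≤ exp (-1)) :
    |∑ y, negMulLog (v y) - ∑ y, negMulLog (w y)|
      ≤ τ + negMulLog τ + τ * log (Fintype.card 𝒴) := by
  refine le_trans ?_ (sum_add_negMulLog_le (fun y => abs_nonneg (v y - w y)) hvw hτ)
  rw [← sum_sub_distrib]
  exact (abs_sum_le_sum_abs _ _).trans (sum_le_sum fun y _ =>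
    abs_negMulLog_sub_negMulLog_le (hv.1 y) (hv.le_one y) (hw.1 y) (hw.le_one y))

lemma sum_sub_mul_log_le {q : 𝒴 → ℝ} {c : ℝ} (hc : 0 < c) (hcq : ∀ y, c ≤ q y)
    (hq : ∀ y, q y ≤ 1) (v w : 𝒴 → ℝ) :
    ∑ y, (w y - v y) * log (q y) ≤ (∑ y, |v y - w y|) * -log c := by
  rw [sum_mul]
  refine sum_le_sum fun y _ => ?_
  have hlog : |log (q y)| ≤ -log c := by
    have := log_le_log hc (hcq y)
    rw [abs_le]
    constructor
    · linarith
    · linarith [log_nonpos (hc.trans_le (hcq y)).le (hq y), log_nonpos hc.le ((hcq y).trans (hq y))]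
  calc (w y - v y) * log (q y) ≤ |(v y - w y) * log (q y)| := by
        rw [← neg_sub, neg_mul]; exact neg_le_abs _
    _ ≤ |v y - w y| * -log c := by
        rw [abs_mul]; exact mul_le_mul_of_nonneg_left hlog (abs_nonneg _)

noncomputable def mixUniform (γ : ℝ) (Q : 𝒴 → ℝ) : 𝒴 → ℝ :=
  fun y => (1 - γ) * Q y + γ / Fintype.card 𝒴

variable {γ : ℝ} {Q : 𝒴 → ℝ}

lemma isDist_mixUniform [Nonempty 𝒴] (hQ : IsDist Q) (hγ0 : 0 ≤ γ) (hγ1 : γ ≤ 1) :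
    IsDist (mixUniform γ Q) := by
  refine ⟨fun y => add_nonneg (mul_nonneg (by linarith) (hQ.1 y)) (by positivity), ?_⟩
  have hK : (Fintype.card 𝒴 : ℝ) ≠ 0 := Nat.cast_ne_zero.2 Fintype.card_ne_zero
  simp only [mixUniform, sum_add_distrib, ← mul_sum, hQ.2, sum_const, card_univ, nsmul_eq_mul]
  field_simp
  ring

lemma div_card_le_mixUniform (hQ : IsDist Q) (hγ1 : γ ≤ 1) (y : 𝒴) :
    γ / Fintype.card 𝒴 ≤ mixUniform γ Q y :=
  le_add_of_nonneg_left (mul_nonneg (by linarith) (hQ.1 y))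

lemma mul_le_mixUniform (hγ0 : 0 ≤ γ) (y : 𝒴) : (1 - γ) * Q y ≤ mixUniform γ Q y :=
  le_add_of_nonneg_right (by positivity)

lemma sum_mul_log_le_sum_mul_log_mixUniform_add {w : 𝒴 → ℝ} (hw : IsDist w) (hQ : IsDist Q)
    (hwQ : ∀ y, Q y = 0 → w y = 0) (hγ0 : 0 ≤ γ) (hγ : γ ≤ 1 / 2) :
    ∑ y, w y * log (Q y) ≤ ∑ y, w y * log (mixUniform γ Q y) + 2 * γ := by
  have h1γ : 0 < 1 - γ := by linarith
  calc ∑ y, w y * log (Q y) ≤ ∑ y, (w y * log (mixUniform γ Q y) + w y * -log (1 - γ)) := by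
        refine sum_le_sum fun y _ => ?_
        rcases (hw.1 y).eq_or_lt with hwy | hwy
        · simp [← hwy]
        have hQy : 0 < Q y := (hQ.1 y).lt_of_ne fun h => hwy.ne (hwQ y h.symm).symm
        have h := log_le_log (by positivity) (mul_le_mixUniform (Q := Q) hγ0 y)
        rw [log_mul h1γ.ne' hQy.ne'] at h
        nlinarith
    _ = ∑ y, w y * log (mixUniform γ Q y) + -log (1 - γ) := by
        rw [sum_add_distrib, ← sum_mul, hw.2, one_mul]
    _ ≤ ∑ y, w y * log (mixUniform γ Q y) + 2 * γ := by
        gcongr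
        exact neg_log_one_sub_le_two_mul hγ0 hγ

lemma sum_mul_log_div_mixUniform_le [Nonempty 𝒴] {v w : 𝒴 → ℝ} (hv : IsDist v) (hw : IsDist w)
    (hQ : IsDist Q) (hwQ : ∀ y, Q y = 0 → w y = 0) {τ : ℝ} (hτ : τ ≤ exp (-1)) (hγ0 : 0 < γ)
    (hγ : γ ≤ 1 / 2) (hvw : ∑ y, |v y - w y| ≤ τ) :
    ∑ y, v y * log (v y / mixUniform γ Q y) ≤ ∑ y, w y * log (w y / Q y) +
      (2 * γ + τ * (1 + 2 * log (Fintype.card 𝒴) - log γ - log τ)) := by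
  -- `D(v‖Q') - D(w‖Q)` splits into an entropy difference, the cross term `∑ (w - v) log Q'`
  -- (small because `log Q' ≥ log (γ / |𝒴|)`), and the price `∑ w log (Q / Q')` of mixing.
  have hK : (0 : ℝ) < Fintype.card 𝒴 := Nat.cast_pos.2 Fintype.card_pos
  have hlb : ∀ y, γ / Fintype.card 𝒴 ≤ mixUniform γ Q y := div_card_le_mixUniform hQ (by linarith)
  have hpos : ∀ y, 0 < mixUniform γ Q y := fun y => (by positivity : (0 : ℝ) < _).trans_le (hlb y)
  have hentropy := (abs_le.1 (abs_sum_negMulLog_sub_sum_negMulLog_le hv hw hvw hτ)).1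
  have hcross := sum_sub_mul_log_le (by positivity) hlb
    (isDist_mixUniform hQ hγ0.le (by linarith)).le_one (v := v) (w := w)
  have hmix := sum_mul_log_le_sum_mul_log_mixUniform_add hw hQ hwQ hγ0.le hγ
  rw [log_div hγ0.ne' hK.ne', neg_sub] at hcross
  have hcross' := hcross.trans (mul_le_mul_of_nonneg_right hvw (sub_nonneg.2
    ((log_nonpos hγ0.le (by linarith)).trans (log_nonneg (Nat.one_le_cast.2 Fintype.card_pos)))))
  rw [sum_congr rfl fun y _ => mul_log_div_eq_sub fun h => absurd h (hpos y).ne',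
    sum_congr rfl fun y _ => mul_log_div_eq_sub (hwQ y), sum_sub_distrib, sum_sub_distrib]
  simp only [negMulLog, sub_mul, sum_sub_distrib, neg_mul, sum_neg_distrib] at hentropy hcross'
  linarith

end Distributions

section Capacity

variable {𝒳 𝒴 : Type*} [Fintype 𝒳] [Fintype 𝒴]

lemma klE_nonneg {P Q : 𝒴 → ℝ} (hP : IsDist P) (hQ : IsDist Q) : 0 ≤ klE P Q := by
  unfold klE
  split_ifs with h
  · exact EReal.coe_nonneg.2 (hP.sum_mul_log_div_nonneg hQ h)
  · exact le_top

lemma capE_nonneg [Nonempty 𝒳] {W : 𝒳 → 𝒴 → ℝ} (hW : ∀ x, IsDist (W x)) : 0 ≤ capE W :=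
  le_iInf₂ fun _ hQ => le_iSup_of_le (Classical.arbitrary 𝒳) (klE_nonneg (hW _) hQ)

lemma capE_le_log_card [Nonempty 𝒴] {W : 𝒳 → 𝒴 → ℝ} (hW : ∀ x, IsDist (W x)) :
    capE W ≤ (log (Fintype.card 𝒴) : ℝ) := by
  have hK : (0 : ℝ) < Fintype.card 𝒴 := Nat.cast_pos.2 Fintype.card_pos
  refine (iInf₂_le _ isDist_uniform).trans (iSup_le fun x => ?_)
  rw [klE, if_pos fun y h => absurd h (by positivity), EReal.coe_le_coe_iff,
    ← one_mul (log _), ← (hW x).2, sum_mul]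
  refine sum_le_sum fun y _ => ?_
  rw [mul_log_div_eq_sub fun h => absurd h (by positivity), log_inv, mul_neg, sub_neg_eq_add]
  linarith [mul_log_nonpos ((hW x).1 y) ((hW x).le_one y)]

lemma capE_eq_coe_capR [Nonempty 𝒳] [Nonempty 𝒴] {W : 𝒳 → 𝒴 → ℝ} (hW : ∀ x, IsDist (W x)) :
    capE W = (capR W : EReal) :=
  (EReal.coe_toReal (ne_top_of_le_ne_top (EReal.coe_ne_top _) (capE_le_log_card hW))
    (ne_bot_of_le_ne_bot (by simp) (capE_nonneg hW))).symm

lemma capR_le_of_forall_sum_mul_log_div_le [Nonempty 𝒳] [Nonempty 𝒴] {V : 𝒳 → 𝒴 → ℝ}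
    (hV : ∀ x, IsDist (V x)) {Q : 𝒴 → ℝ} (hQ : IsDist Q) (hQpos : ∀ y, 0 < Q y) {c : ℝ}
    (hc : ∀ x, ∑ y, V x y * log (V x y / Q y) ≤ c) : capR V ≤ c := by
  have h : capE V ≤ (c : EReal) := by
    refine (iInf₂_le Q hQ).trans (iSup_le fun x => ?_)
    rw [klE, if_pos fun y h => absurd h (hQpos y).ne']
    exact EReal.coe_le_coe_iff.2 (hc x)
  rwa [capE_eq_coe_capR hV, EReal.coe_le_coe_iff] at h

lemma exists_forall_sum_mul_log_div_le_capR_add [Nonempty 𝒳] [Nonempty 𝒴] {W : 𝒳 → 𝒴 → ℝ}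
    (hW : ∀ x, IsDist (W x)) {η : ℝ} (hη : 0 < η) :
    ∃ Q, IsDist Q ∧ ∀ x, (∀ y, Q y = 0 → W x y = 0) ∧
      ∑ y, W x y * log (W x y / Q y) ≤ capR W + η := by
  have hlt : capE W < ((capR W + η : ℝ) : EReal) := by
    rw [capE_eq_coe_capR hW, EReal.coe_lt_coe_iff]
    linarith
  simp only [capE, iInf_lt_iff] at hlt
  obtain ⟨Q, hQ, hsup⟩ := hlt
  refine ⟨Q, hQ, fun x => ?_⟩
  have hx := (le_iSup (fun x => klE (W x) Q) x).trans_lt hsup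
  unfold klE at hx
  split_ifs at hx with hWQ
  · exact ⟨hWQ, (EReal.coe_lt_coe_iff.1 hx).le⟩
  · simp at hx

lemma capR_le_capR_add [Nonempty 𝒳] [Nonempty 𝒴] {V W : 𝒳 → 𝒴 → ℝ} (hV : ∀ x, IsDist (V x))
    (hW : ∀ x, IsDist (W x)) {τ : ℝ} (hτ : τ ≤ exp (-1)) (hγ0 : 0 < γ) (hγ : γ ≤ 1 / 2)
    (hVW : ∀ x, ∑ y, |V x y - W x y| ≤ τ) :
    capR V ≤ capR W + (2 * γ + τ * (1 + 2 * log (Fintype.card 𝒴) - log γ - log τ)) := by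
  refine le_of_forall_pos_le_add fun η hη => ?_
  obtain ⟨Q, hQ, hWQ⟩ := exists_forall_sum_mul_log_div_le_capR_add hW hη
  have hQ' := isDist_mixUniform hQ hγ0.le (by linarith)
  refine capR_le_of_forall_sum_mul_log_div_le hV hQ'
    (fun y => (by positivity : 0 < γ / Fintype.card 𝒴).trans_le
      (div_card_le_mixUniform hQ (by linarith) y)) fun x => ?_
  have h := sum_mul_log_div_mixUniform_le (hV x) (hW x) hQ (hWQ x).1 hτ hγ0 hγ (hVW x)
  linarith [(hWQ x).2]

lemma abs_capR_sub_capR_le [Nonempty 𝒳] [Nonempty 𝒴] {V W : 𝒳 → 𝒴 → ℝ}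
    (hV : ∀ x, IsDist (V x)) (hW : ∀ x, IsDist (W x)) {τ : ℝ} (hτ : τ ≤ exp (-1))
    (hγ0 : 0 < γ) (hγ : γ ≤ 1 / 2) (hVW : ∀ x, ∑ y, |V x y - W x y| ≤ τ) :
    |capR V - capR W| ≤ 2 * γ + τ * (1 + 2 * log (Fintype.card 𝒴) - log γ - log τ) := by
  have hWV : ∀ x, ∑ y, |W x y - V x y| ≤ τ := fun x => by simpa only [abs_sub_comm] using hVW x
  rw [abs_sub_le_iff]
  constructor
  · linarith [capR_le_capR_add hV hW hτ hγ0 hγ hVW]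
  · linarith [capR_le_capR_add hW hV hτ hγ0 hγ hWV]

end Capacity

section SampleSize

noncomputable def logVN (cX cY : ℕ) (α ε : ℝ) : ℝ :=
  log (25 / 4 * thetaAl cX cY α * Nal cX cY α / ε ^ 2)

variable {cX cY : ℕ} {α ε : ℝ}

lemma log_two_le_log_div (hX : 2 ≤ cX) (hα0 : 0 < α) (hα1 : α ≤ 1 / 2) :
    log 2 ≤ log (cX / α) := by
  have hX' : (2 : ℝ) ≤ cX := by exact_mod_cast hX
  refine log_le_log two_pos ((le_div_iff₀ hα0).2 ?_)
  nlinarith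

lemma one_le_thetaAl_mul (hX : 2 ≤ cX) (hY : 1 ≤ cY) (hα0 : 0 < α) (hα1 : α ≤ 1 / 2) :
    1 ≤ thetaAl cX cY α * (cX * log (cX / α)) := by
  set b : ℝ := cX * log (cX / α)
  have hb : 1 ≤ b := by
    have hX' : (2 : ℝ) ≤ cX := by exact_mod_cast hX
    nlinarith [log_two_le_log_div hX hα0 hα1, log_two_gt_d9]
  have ha : 1 ≤ (cY : ℝ) * exp 2 :=
    one_le_mul_of_one_le_of_one_le (Nat.one_le_cast.2 hY) (one_le_exp two_pos.le)
  have hb0 : (0 : ℝ) ≤ b := by linarith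
  calc (1 : ℝ) ≤ ((cY * exp 2 / b) * b ^ 5) ^ ((1 : ℝ) / 5) := by
        refine one_le_rpow ?_ (by norm_num)
        rw [div_mul_eq_mul_div, pow_succ, ← mul_assoc, mul_div_assoc, div_self (by positivity),
          mul_one]
        exact one_le_mul_of_one_le_of_one_le ha (one_le_pow₀ hb)
    _ = thetaAl cX cY α * b := by
        rw [mul_rpow (by positivity) (by positivity), one_div,
          ← Nat.cast_ofNat (R := ℝ) (n := 5), pow_rpow_inv_natCast hb0 (by norm_num), thetaAl,
          one_div, Nat.cast_ofNat]

lemma mul_card_div_sq_le (hX : 2 ≤ cX) (hY : 1 ≤ cY) (hα0 : 0 < α) (hα1 : α ≤ 1 / 2) :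
    25 * cY / ε ^ 2 ≤ 25 / 4 * thetaAl cX cY α * Nal cX cY α / ε ^ 2 := by
  have h := one_le_thetaAl_mul hX hY hα0 hα1
  have hN : 25 / 4 * thetaAl cX cY α * Nal cX cY α =
      25 * cY * (thetaAl cX cY α * (cX * log (cX / α))) := by
    rw [Nal]; ring
  rw [hN]
  exact div_le_div_of_nonneg_right (le_mul_of_one_le_right (by positivity) h) (sq_nonneg ε)

lemma three_halves_le_logVN (hX : 2 ≤ cX) (hY : 1 ≤ cY) (hα0 : 0 < α) (hα1 : α ≤ 1 / 2)
    (hε0 : 0 < ε) (hε2 : ε ≤ 2) : 3 / 2 ≤ logVN cX cY α ε := by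
  have hZ : 25 / 4 ≤ 25 / 4 * thetaAl cX cY α * Nal cX cY α / ε ^ 2 := by
    refine le_trans ?_ (mul_card_div_sq_le hX hY hα0 hα1)
    rw [le_div_iff₀ (by positivity)]
    nlinarith [(Nat.one_le_cast.2 hY : (1 : ℝ) ≤ cY)]
  have he : exp (3 / 2) ≤ 25 / 4 := by
    refine le_of_pow_le_pow_left₀ two_ne_zero (by norm_num) ?_
    rw [← exp_nat_mul, show ((2 : ℕ) : ℝ) * (3 / 2) = ((3 : ℕ) : ℝ) * 1 by norm_num, exp_nat_mul]
    calc exp 1 ^ 3 ≤ 3 ^ 3 := pow_le_pow_left₀ (exp_pos 1).le exp_one_lt_three.le 3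
      _ ≤ (25 / 4) ^ 2 := by norm_num
  rw [logVN, le_log_iff_exp_le (by linarith)]
  exact he.trans hZ

lemma div_four_mul_logVN_le_exp_neg_one (hX : 2 ≤ cX) (hY : 1 ≤ cY) (hα0 : 0 < α)
    (hα1 : α ≤ 1 / 2) (hε0 : 0 < ε) (hε2 : ε ≤ 2) :
    ε / (4 * logVN cX cY α ε) ≤ exp (-1) := by
  have hA := three_halves_le_logVN hX hY hα0 hα1 hε0 hε2
  rw [exp_neg, div_le_iff₀ (by linarith)]
  have h3 : 1 / 3 ≤ (exp 1)⁻¹ := by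
    rw [one_div]; exact inv_anti₀ (exp_pos 1) exp_one_lt_three.le
  nlinarith

lemma capacity_error_le (hX : 2 ≤ cX) (hY : 1 ≤ cY) (hα0 : 0 < α) (hα1 : α ≤ 1 / 2)
    (hε0 : 0 < ε) (hε2 : ε ≤ 2) :
    2 * (ε / 8) + ε / (4 * logVN cX cY α ε) *
      (1 + 2 * log cY - log (ε / 8) - log (ε / (4 * logVN cX cY α ε))) ≤ ε := by
  have hA := three_halves_le_logVN hX hY hα0 hα1 hε0 hε2
  have hZK := mul_card_div_sq_le (ε := ε) hX hY hα0 hα1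
  set A := logVN cX cY α ε
  set Z := 25 / 4 * thetaAl cX cY α * Nal cX cY α / ε ^ 2
  have hY' : (1 : ℝ) ≤ cY := Nat.one_le_cast.2 hY
  have hA0 : 0 < A := by linarith
  have hZ0 : 0 < Z := lt_of_lt_of_le (by positivity) hZK
  have hexpA : exp A = Z := exp_log hZ0
  have hAZ : A ≤ Z := (log_le_sub_one_of_pos hZ0).trans (by linarith)
  have hZε : 25 * cY ≤ Z * ε ^ 2 := (div_le_iff₀ (by positivity)).1 hZK
  have hZ4 : 25 * cY / 4 ≤ Z :=
    le_trans (div_le_div_of_nonneg_left (by positivity) (by positivity) (by nlinarith)) hZK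
  -- The bracket on the left is `log (32 e |𝒴|² A / ε²)`, and this is at most `log (Z ^ 3) = 3 A`.
  have hcube : 32 * exp 1 * cY ^ 2 * A / ε ^ 2 ≤ exp (3 * A) := by
    rw [show 3 * A = ((3 : ℕ) : ℝ) * A by norm_num, exp_nat_mul, hexpA,
      div_le_iff₀ (by positivity)]
    calc 32 * exp 1 * cY ^ 2 * A ≤ A * (25 * cY / 4) * (25 * cY) := by
          nlinarith [exp_one_lt_three, mul_pos hA0 (by positivity : (0 : ℝ) < cY ^ 2)]
      _ ≤ Z * Z * (Z * ε ^ 2) := by gcongr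
      _ = Z ^ 3 * ε ^ 2 := by ring
  have hlog := (log_le_iff_le_exp (by positivity)).2 hcube
  rw [log_div (by positivity) (by positivity), log_mul (by positivity) hA0.ne',
    log_mul (by positivity) (by positivity), log_mul (by norm_num) (exp_pos 1).ne', log_exp,
    log_pow, log_pow, show (32 : ℝ) = 8 * 4 by norm_num,
    log_mul (by norm_num) (by norm_num)] at hlog
  rw [log_div hε0.ne' (by norm_num), log_div hε0.ne' (by positivity),
    log_mul (by norm_num) hA0.ne']
  have key : ε / (4 * A) * (1 + 2 * log cY - (log ε - log 8) - (log ε - (log 4 + log A)))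
      ≤ ε / (4 * A) * (3 * A) :=
    mul_le_mul_of_nonneg_left (by push_cast at hlog; linarith) (by positivity)
  rw [show ε / (4 * A) * (3 * A) = 3 * ε / 4 by field_simp] at key
  linarith

lemma card_mul_two_pow_mul_exp_le (hX : 2 ≤ cX) (hY : 1 ≤ cY) (hα0 : 0 < α)
    (hα1 : α ≤ 1 / 2) (hε0 : 0 < ε) (hε2 : ε ≤ 2) {m : ℝ}
    (hm : 375 / 4 * (Nal cX cY α / ε ^ 2) * logVN cX cY α ε ^ 2 ≤ cX * m) :
    cX * 2 ^ cY * exp (-2 * m * (ε / (8 * logVN cX cY α ε)) ^ 2) ≤ α := by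
  have hA := three_halves_le_logVN hX hY hα0 hα1 hε0 hε2
  have hL2 := log_two_le_log_div hX hα0 hα1
  set A := logVN cX cY α ε
  set L := log (cX / α)
  have hX0 : (0 : ℝ) < cX := by positivity
  have hY' : (1 : ℝ) ≤ cY := Nat.one_le_cast.2 hY
  have hL0 : 0 < L := (log_pos one_lt_two).trans_le hL2
  have hm' : 375 * cY * L * A ^ 2 ≤ m * ε ^ 2 := by
    rw [Nal, show 375 / 4 * (4 * cX * cY * L / ε ^ 2) * A ^ 2
      = cX * (375 * cY * L * A ^ 2 / ε ^ 2) by ring] at hm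
    exact (div_le_iff₀ (by positivity)).1 (le_of_mul_le_mul_left hm hX0)
  have hexponent : log (cX * 2 ^ cY / α) ≤ 2 * m * (ε / (8 * A)) ^ 2 := by
    rw [mul_div_right_comm, log_mul (by positivity) (by positivity), log_pow, div_pow, mul_pow,
      mul_div_assoc', le_div_iff₀ (by positivity)]
    nlinarith [mul_le_mul_of_nonneg_left hL2 (by positivity : (0 : ℝ) ≤ cY),
      mul_le_mul_of_nonneg_right hY' hL0.le, mul_pos (mul_pos hL0 (by positivity : (0 : ℝ) < cY))
        (by positivity : 0 < A ^ 2)]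
  have h := (div_le_iff₀ hα0).1 ((log_le_iff_le_exp (by positivity)).1 hexponent)
  calc cX * 2 ^ cY * exp (-2 * m * (ε / (8 * A)) ^ 2)
      ≤ exp (2 * m * (ε / (8 * A)) ^ 2) * α * exp (-2 * m * (ε / (8 * A)) ^ 2) := by gcongr
    _ = α := by rw [mul_comm, ← mul_assoc, ← exp_add]; simp

end SampleSize

lemma sum_empCh_eq {𝒳 𝒴 : Type*} [Fintype 𝒴] [DecidableEq 𝒴] {m : ℕ} (Ys : 𝒳 → Fin m → 𝒴)
    (x : 𝒳) (A : Finset 𝒴) :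
    ∑ y ∈ A, empCh Ys x y = (∑ i, (A : Set 𝒴).indicator 1 (Ys x i)) / m := by
  simp only [empCh, ← sum_div, card_filter, Nat.cast_sum]
  rw [sum_comm]
  congr 1
  refine sum_congr rfl fun i _ => ?_
  simp [Set.indicator_apply]

lemma isDist_empCh {𝒳 𝒴 : Type*} [Fintype 𝒴] [DecidableEq 𝒴] {m : ℕ} (hm : 0 < m)
    (Ys : 𝒳 → Fin m → 𝒴) (x : 𝒳) : IsDist (empCh Ys x) := by
  refine ⟨fun y => by unfold empCh; positivity, ?_⟩
  have h := sum_empCh_eq Ys x univ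
  simp only [coe_univ, Set.indicator_univ, Pi.one_apply, sum_const, card_univ, Fintype.card_fin,
    nsmul_eq_mul, mul_one] at h
  rw [h, div_self (Nat.cast_ne_zero.2 hm.ne')]

section Sampling

variable {Ω : Type*} [MeasurableSpace Ω] {μ : Measure Ω} [IsProbabilityMeasure μ]

lemma measure_card_mul_add_le_sum_le {ι : Type*} {X : ι → Ω → ℝ} (hind : iIndepFun X μ)
    (hmeas : ∀ i, Measurable (X i)) (hX : ∀ i ω, X i ω ∈ Set.Icc 0 1) (s : Finset ι) {p u : ℝ}
    (hp : ∀ i ∈ s, μ[X i] = p) (hu : 0 ≤ u) :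
    μ {ω | #s * (p + u) ≤ ∑ i ∈ s, X i ω} ≤ ENNReal.ofReal (exp (-2 * #s * u ^ 2)) := by
  have hcentered : iIndepFun (fun i ω => X i ω - μ[X i]) μ := by
    exact hind.comp (fun i t => t - μ[X i]) fun _ => measurable_id.sub_const _
  have hsubG : ∀ i ∈ s,
      HasSubgaussianMGF (fun ω => X i ω - μ[X i]) ((‖(1 : ℝ) - 0‖₊ / 2) ^ 2) μ :=
    fun i _ => hasSubgaussianMGF_of_mem_Icc (hmeas i).aemeasurable (ae_of_all _ (hX i))
  have h := HasSubgaussianMGF.measure_sum_ge_le_of_iIndepFun hcentered hsubG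
    (mul_nonneg (Nat.cast_nonneg #s) hu)
  have hset : {ω | #s * (p + u) ≤ ∑ i ∈ s, X i ω}
      = {ω | #s * u ≤ ∑ i ∈ s, (X i ω - μ[X i])} := by
    ext ω
    simp only [Set.mem_ofPred_eq, sum_sub_distrib, sum_congr rfl hp, sum_const, nsmul_eq_mul]
    constructor <;> intro h <;> linarith
  rw [hset, ← ofReal_measureReal]
  refine ENNReal.ofReal_le_ofReal (h.trans_eq ?_)
  rcases (Nat.cast_nonneg (α := ℝ) #s).eq_or_lt with hs | hs
  · simp [← hs]
  · simp only [sub_zero, nnnorm_one, one_div, inv_pow, sum_const, nsmul_eq_mul, NNReal.coe_mul,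
      NNReal.coe_natCast, NNReal.coe_inv, NNReal.coe_pow, NNReal.coe_ofNat, neg_mul, exp_eq_exp]
    field_simp

lemma ofReal_one_sub_le_measure_compl {s : Set Ω} {α : ℝ} (hα : 0 ≤ α)
    (hs : μ s ≤ ENNReal.ofReal α) : ENNReal.ofReal (1 - α) ≤ μ sᶜ := by
  rw [ENNReal.ofReal_sub _ hα, ENNReal.ofReal_one, tsub_le_iff_right, add_comm]
  calc (1 : ENNReal) = μ Set.univ := measure_univ.symm
    _ ≤ μ s + μ sᶜ := measure_univ_le_add_compl s
    _ ≤ ENNReal.ofReal α + μ sᶜ := by gcongr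

lemma measure_sum_empCh_gt_le {𝒳 𝒴 : Type*} [Fintype 𝒴] [DecidableEq 𝒴] [MeasurableSpace 𝒴]
    [MeasurableSingletonClass 𝒴] {m : ℕ} (hm : 0 < m) (Y : 𝒳 → Fin m → Ω → 𝒴)
    (hmeas : ∀ x i, Measurable (Y x i))
    (hindep : iIndepFun (m := fun _ : 𝒳 × Fin m => ‹MeasurableSpace 𝒴›)
      (fun p ω => Y p.1 p.2 ω) μ)
    {W : 𝒳 → 𝒴 → ℝ} (hW : ∀ x, IsDist (W x))
    (hlaw : ∀ x i y, μ (Y x i ⁻¹' {y}) = ENNReal.ofReal (W x y)) (x : 𝒳) (A : Finset 𝒴)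
    {u : ℝ} (hu : 0 ≤ u) :
    μ {ω | ∑ y ∈ A, W x y + u < ∑ y ∈ A, empCh (fun x i => Y x i ω) x y}
      ≤ ENNReal.ofReal (exp (-2 * m * u ^ 2)) := by
  set X : Fin m → Ω → ℝ := fun i ω => (A : Set 𝒴).indicator 1 (Y x i ω)
  have hXmeas : ∀ i, Measurable (X i) :=
    fun i => (measurable_one.indicator A.measurableSet).comp (hmeas x i)
  have hXind : iIndepFun X μ := by
    exact (hindep.precomp (Prod.mk_right_injective x)).comp (fun _ => (A : Set 𝒴).indicator 1)
      fun _ => measurable_one.indicator A.measurableSet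
  have hX01 : ∀ i ω, X i ω ∈ Set.Icc 0 1 := fun i ω => by
    by_cases h : Y x i ω ∈ A <;> simp [X, h]
  have hXmean : ∀ i ∈ univ, μ[X i] = ∑ y ∈ A, W x y := fun i _ => by
    have hpre : MeasurableSet (Y x i ⁻¹' A) := hmeas x i A.measurableSet
    rw [show X i = (Y x i ⁻¹' A).indicator 1 from rfl, integral_indicator_one hpre,
      measureReal_def, ← sum_measure_preimage_singleton A
        fun y _ => hmeas x i (measurableSet_singleton y)]
    simp_rw [hlaw x i]
    rw [← ENNReal.ofReal_sum_of_nonneg fun y _ => (hW x).1 y,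
      ENNReal.toReal_ofReal (sum_nonneg fun y _ => (hW x).1 y)]
  have h := measure_card_mul_add_le_sum_le hXind hXmeas hX01 univ hXmean hu
  rw [card_univ, Fintype.card_fin] at h
  refine (measure_mono fun ω hω => ?_).trans h
  have hm' : (0 : ℝ) < m := Nat.cast_pos.2 hm
  simp only [Set.mem_ofPred_eq, sum_empCh_eq, lt_div_iff₀ hm'] at hω ⊢
  linarith

lemma measure_exists_sum_empCh_gt_le {𝒳 𝒴 : Type*} [Fintype 𝒳] [Fintype 𝒴] [DecidableEq 𝒴]
    [MeasurableSpace 𝒴] [MeasurableSingletonClass 𝒴] {m : ℕ} (hm : 0 < m)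
    (Y : 𝒳 → Fin m → Ω → 𝒴) (hmeas : ∀ x i, Measurable (Y x i))
    (hindep : iIndepFun (m := fun _ : 𝒳 × Fin m => ‹MeasurableSpace 𝒴›)
      (fun p ω => Y p.1 p.2 ω) μ)
    {W : 𝒳 → 𝒴 → ℝ} (hW : ∀ x, IsDist (W x))
    (hlaw : ∀ x i y, μ (Y x i ⁻¹' {y}) = ENNReal.ofReal (W x y)) {u : ℝ} (hu : 0 ≤ u) :
    μ {ω | ∃ x, ∃ A : Finset 𝒴, ∑ y ∈ A, W x y + u < ∑ y ∈ A, empCh (fun x i => Y x i ω) x y}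
      ≤ ENNReal.ofReal (Fintype.card 𝒳 * 2 ^ Fintype.card 𝒴 * exp (-2 * m * u ^ 2)) := by
  have hunion : {ω | ∃ x, ∃ A : Finset 𝒴,
      ∑ y ∈ A, W x y + u < ∑ y ∈ A, empCh (fun x i => Y x i ω) x y} = ⋃ p : 𝒳 × Finset 𝒴,
      {ω | ∑ y ∈ p.2, W p.1 y + u < ∑ y ∈ p.2, empCh (fun x i => Y x i ω) p.1 y} := by
    ext ω
    simp
  rw [hunion]
  refine (measure_iUnion_fintype_le μ _).trans ?_
  refine (sum_le_sum fun p _ =>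
    measure_sum_empCh_gt_le hm Y hmeas hindep hW hlaw p.1 p.2 hu).trans_eq ?_
  rw [sum_const, card_univ, Fintype.card_prod, Fintype.card_finset, nsmul_eq_mul,
    ← ENNReal.ofReal_natCast, ← ENNReal.ofReal_mul (by positivity)]
  push_cast
  rfl

end Sampling

theorem stmt_10_general {𝒳 𝒴 : Type*} [Fintype 𝒳] [Nonempty 𝒳] [Fintype 𝒴] [Nonempty 𝒴]
    [DecidableEq 𝒴] [MeasurableSpace 𝒴] [MeasurableSingletonClass 𝒴]
    {Ω : Type*} [MeasurableSpace Ω] (μ : Measure Ω) [IsProbabilityMeasure μ]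
    (h𝒳 : 2 ≤ Fintype.card 𝒳)
    (W : 𝒳 → 𝒴 → ℝ) (hW : ∀ x, IsDist (W x))
    (α : ℝ) (hα0 : 0 < α) (hα1 : α ≤ 1 / 2)
    (ε : ℝ) (hε0 : 0 < ε) (hε2 : ε ≤ 2)
    (m n : ℕ) (hm : 0 < m) (hnm : n = Fintype.card 𝒳 * m)
    (hn : (n : ℝ) ≥ max
      (375 / 4 * (Nal (Fintype.card 𝒳) (Fintype.card 𝒴) α / ε ^ 2) *
        (Real.log (25 / 4 * thetaAl (Fintype.card 𝒳) (Fintype.card 𝒴) α *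
          Nal (Fintype.card 𝒳) (Fintype.card 𝒴) α / ε ^ 2)) ^ 2)
      (2 * Nal (Fintype.card 𝒳) (Fintype.card 𝒴) α / ε))
    (Y : 𝒳 → Fin m → Ω → 𝒴) (hmeas : ∀ x i, Measurable (Y x i))
    (hindep : iIndepFun (m := fun _ : 𝒳 × Fin m => ‹MeasurableSpace 𝒴›)
      (fun p ω => Y p.1 p.2 ω) μ)
    (hlaw : ∀ x i y, μ (Y x i ⁻¹' {y}) = ENNReal.ofReal (W x y)) :
    ENNReal.ofReal (1 - α) ≤
      μ {ω | |capR (empCh fun x i => Y x i ω) - capR W| ≤ ε} := by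
  have hY : 1 ≤ Fintype.card 𝒴 := Fintype.card_pos
  have hA := three_halves_le_logVN h𝒳 hY hα0 hα1 hε0 hε2
  set u := ε / (8 * logVN (Fintype.card 𝒳) (Fintype.card 𝒴) α ε)
  have hu : 0 ≤ u := by positivity
  set bad := {ω | ∃ x, ∃ A : Finset 𝒴,
    ∑ y ∈ A, W x y + u < ∑ y ∈ A, empCh (fun x i => Y x i ω) x y}
  have hbad : μ bad ≤ ENNReal.ofReal α := by
    refine (measure_exists_sum_empCh_gt_le hm Y hmeas hindep hW hlaw hu).trans
      (ENNReal.ofReal_le_ofReal (card_mul_two_pow_mul_exp_le h𝒳 hY hα0 hα1 hε0 hε2 ?_))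
    rw [← Nat.cast_mul, ← hnm]
    exact (le_max_left _ _).trans hn
  have hgood : badᶜ ⊆ {ω | |capR (empCh fun x i => Y x i ω) - capR W| ≤ ε} := by
    intro ω hω
    simp only [bad, Set.mem_compl_iff, Set.mem_ofPred_eq, not_exists, not_lt] at hω
    have hdist : ∀ x, ∑ y, |empCh (fun x i => Y x i ω) x y - W x y|
        ≤ ε / (4 * logVN (Fintype.card 𝒳) (Fintype.card 𝒴) α ε) := fun x =>
      (sum_abs_sub_le_of_forall_sum_le (((isDist_empCh hm _ x).2).trans (hW x).2.symm)
        (hω x)).trans_eq (by ring)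
    exact (abs_capR_sub_capR_le (isDist_empCh hm _) hW
      (div_four_mul_logVN_le_exp_neg_one h𝒳 hY hα0 hα1 hε0 hε2) (by positivity) (by linarith)
      hdist).trans (capacity_error_le h𝒳 hY hα0 hα1 hε0 hε2)
  exact (ofReal_one_sub_le_measure_compl hα0.le hbad).trans (measure_mono hgood)

/-- sample complexity of capacity estimation. If
`n ≥ max{L·(N_α/ε²)·log²(V_α·N_α/ε²), 2·N_α/ε}` with `L = 375/4` and
`V_α = (25/4)·θ_α`, then the capacity estimate has error at most `ε`
with probability at least `1 − α`. -/
theorem stmt_10 {𝒳 𝒴 : Type*} [Fintype 𝒳] [Nonempty 𝒳] [Fintype 𝒴] [Nonempty 𝒴]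
    [DecidableEq 𝒴] [MeasurableSpace 𝒴] [MeasurableSingletonClass 𝒴]
    {Ω : Type*} [MeasurableSpace Ω] (μ : Measure Ω) [IsProbabilityMeasure μ]
    (h𝒳 : 2 ≤ Fintype.card 𝒳)
    (W : 𝒳 → 𝒴 → ℝ) (hW : ∀ x, IsDist (W x))
    (α : ℝ) (hα0 : 0 < α) (hα1 : α ≤ 1 / 2)
    (ε : ℝ) (hε0 : 0 < ε) (hε2 : ε ≤ 2)
    (m n : ℕ) (hm : 0 < m) (hnm : n = Fintype.card 𝒳 * m)
    (hn1 : Fintype.card 𝒳 ≤ n) (hn2 : 2 * Fintype.card 𝒴 ≤ n)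
    (hn : (n : ℝ) ≥ max
      (375 / 4 * (Nal (Fintype.card 𝒳) (Fintype.card 𝒴) α / ε ^ 2) *
        (Real.log (25 / 4 * thetaAl (Fintype.card 𝒳) (Fintype.card 𝒴) α *
          Nal (Fintype.card 𝒳) (Fintype.card 𝒴) α / ε ^ 2)) ^ 2)
      (2 * Nal (Fintype.card 𝒳) (Fintype.card 𝒴) α / ε))
    (Y : 𝒳 → Fin m → Ω → 𝒴) (hmeas : ∀ x i, Measurable (Y x i))
    (hindep : iIndepFun (m := fun _ : 𝒳 × Fin m => ‹MeasurableSpace 𝒴›)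
      (fun p ω => Y p.1 p.2 ω) μ)
    (hlaw : ∀ x i y, μ (Y x i ⁻¹' {y}) = ENNReal.ofReal (W x y)) :
    ENNReal.ofReal (1 - α) ≤
      μ {ω | |capR (empCh fun x i => Y x i ω) - capR W| ≤ ε} :=
  stmt_10_general μ h𝒳 W hW α hα0 hα1 ε hε0 hε2 m n hm hnm hn Y hmeas hindep hlaw
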